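/- A pair (A,B) of symmetric 3×3 complex matrices is equivalent under GL₂(ℂ)×GL₃(ℂ) to (I₃, diag(1,−1,0)) if and only if the binary cubic det(xA+yB) ∈ ℂ[x,y] factors as c·(a₁x+b₁y)(a₂x+b₂y)(a₃x+b₃y) with c ≠ 0 and the three vectors (aᵢ,bᵢ) ∈ ℂ² pairwise linearly independent; i.e. the generic orbit O₁₀ of (F₄,α₂) consists exactly of the pencils of symmetric matrices whose determinant has three distinct roots. -/

import Mathlib

/-!
Both conditions are invariant under `GL₂(ℂ) × GL₃(ℂ)`: acting by `(g, Q)` multiplies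
`det(xA + yB)` by `(det Q)²` and substitutes `gᵀ` into `(x, y)`, which keeps the linear factors
pairwise independent. This settles one direction, since `det(xI₃ + y·diag(1,-1,0)) = (x+y)(x-y)x`.

Conversely, let `det(xA + yB) = c ∏ (aᵢx + bᵢy)` with independent factors and `Cᵢ = bᵢA - aᵢB`.
Then `Cᵢ` is singular and `t ↦ det(Cᵢ + tCⱼ)` has a simple root at `0`, so
`tr(adj Cᵢ · Cⱼ) ≠ 0`. Hence `adj Cᵢ · Cⱼ · adj Cᵢ` is a nonzero symmetric matrix, and
polarization yields a kernel vector `vᵢ` of `Cᵢ` on which the pencil is not isotropic. Kernel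
vectors of different `Cᵢ` are orthogonal for both `A` and `B`, so the `vᵢ` diagonalize the pencil
simultaneously to `(diag d, diag e)` with pairwise independent `(dᵢ, eᵢ)`; a suitable `g` and
square roots of the new diagonal entries then normalize it to `(I₃, diag(1,-1,0))`.
-/

open Matrix

/-- Two pairs of 3×3 complex matrices are equivalent under `GL₂(ℂ) × GL₃(ℂ)`, acting by
`((a b; c d), Q) · (A, B) = (Q(aA+bB)Qᵀ, Q(cA+dB)Qᵀ)`. -/
def SEquiv (p q : Matrix (Fin 3) (Fin 3) ℂ × Matrix (Fin 3) (Fin 3) ℂ) : Prop :=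
  ∃ (g : GL (Fin 2) ℂ) (Q : GL (Fin 3) ℂ),
    q.1 = Q.val * (g.val 0 0 • p.1 + g.val 0 1 • p.2) * Q.valᵀ ∧
    q.2 = Q.val * (g.val 1 0 • p.1 + g.val 1 1 • p.2) * Q.valᵀ

section PencilAction

variable {R : Type*} [CommRing R] {n : Type*} [Fintype n]

def pencilSMul (g : Matrix (Fin 2) (Fin 2) R) (Q : Matrix n n R) (p : Matrix n n R × Matrix n n R) :
    Matrix n n R × Matrix n n R :=
  (Q * (g 0 0 • p.1 + g 0 1 • p.2) * Qᵀ, Q * (g 1 0 • p.1 + g 1 1 • p.2) * Qᵀ)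

lemma pencilSMul_one [DecidableEq n] (p : Matrix n n R × Matrix n n R) : pencilSMul 1 1 p = p := by
  simp [pencilSMul]

lemma pencilSMul_pencilSMul (g g' : Matrix (Fin 2) (Fin 2) R) (Q Q' : Matrix n n R)
    (p : Matrix n n R × Matrix n n R) :
    pencilSMul g Q (pencilSMul g' Q' p) = pencilSMul (g * g') (Q * Q') p := by
  simp only [pencilSMul, Matrix.mul_apply, Fin.sum_univ_two, Matrix.transpose_mul, Matrix.mul_add,
    Matrix.add_mul, Matrix.mul_smul, Matrix.smul_mul, Matrix.mul_assoc]
  ext1 <;> module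

lemma pencil_pencilSMul (g : Matrix (Fin 2) (Fin 2) R) (Q : Matrix n n R)
    (p : Matrix n n R × Matrix n n R) (x y : R) :
    x • (pencilSMul g Q p).1 + y • (pencilSMul g Q p).2
      = Q * ((x * g 0 0 + y * g 1 0) • p.1 + (x * g 0 1 + y * g 1 1) • p.2) * Qᵀ := by
  simp only [pencilSMul, Matrix.mul_add, Matrix.add_mul, Matrix.mul_smul, Matrix.smul_mul]
  module

lemma pencilSMul_diagonal [DecidableEq n] (g : Matrix (Fin 2) (Fin 2) R) (s d e : n → R) :
    pencilSMul g (diagonal s) (diagonal d, diagonal e)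
      = (diagonal fun i => s i ^ 2 * (g 0 0 * d i + g 0 1 * e i),
          diagonal fun i => s i ^ 2 * (g 1 0 * d i + g 1 1 * e i)) := by
  simp only [pencilSMul, diagonal_transpose, ← diagonal_smul, diagonal_add, diagonal_mul_diagonal]
  congr 2 <;> ext i <;> simp only [Pi.smul_apply, smul_eq_mul] <;> ring

lemma dotProduct_smul_sub_smul_mulVec (A B : Matrix n n R) (α β : R) (v w : n → R) :
    v ⬝ᵥ (β • A - α • B) *ᵥ w = β * (v ⬝ᵥ A *ᵥ w) - α * (v ⬝ᵥ B *ᵥ w) := by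
  simp [sub_mulVec, smul_mulVec, dotProduct_sub]

end PencilAction

lemma sEquiv_iff {p q : Matrix (Fin 3) (Fin 3) ℂ × Matrix (Fin 3) (Fin 3) ℂ} :
    SEquiv p q ↔ ∃ (g : GL (Fin 2) ℂ) (Q : GL (Fin 3) ℂ), q = pencilSMul g.val Q.val p := by
  simp [SEquiv, pencilSMul, Prod.ext_iff]

lemma SEquiv.symm {p q : Matrix (Fin 3) (Fin 3) ℂ × Matrix (Fin 3) (Fin 3) ℂ}
    (h : SEquiv p q) : SEquiv q p := by
  obtain ⟨g, Q, rfl⟩ := sEquiv_iff.mp h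
  refine sEquiv_iff.mpr ⟨g⁻¹, Q⁻¹, ?_⟩
  rw [pencilSMul_pencilSMul, Units.inv_mul, Units.inv_mul, pencilSMul_one]

lemma SEquiv.trans {p q r : Matrix (Fin 3) (Fin 3) ℂ × Matrix (Fin 3) (Fin 3) ℂ}
    (hpq : SEquiv p q) (hqr : SEquiv q r) : SEquiv p r := by
  obtain ⟨g, Q, rfl⟩ := sEquiv_iff.mp hpq
  obtain ⟨g', Q', rfl⟩ := sEquiv_iff.mp hqr
  exact sEquiv_iff.mpr ⟨g' * g, Q' * Q, pencilSMul_pencilSMul _ _ _ _ _⟩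

def HasThreeDistinctRoots (A B : Matrix (Fin 3) (Fin 3) ℂ) : Prop :=
  ∃ (c : ℂ) (a b : Fin 3 → ℂ), c ≠ 0 ∧
    (∀ x y : ℂ, (x • A + y • B).det = c * ∏ i, (a i * x + b i * y)) ∧
    ∀ i j, i ≠ j → a i * b j ≠ a j * b i

open MvPolynomial in
lemma det_pencil_eq_prod_iff (A B : Matrix (Fin 3) (Fin 3) ℂ) (c : ℂ) (a b : Fin 3 → ℂ) :
    (Matrix.of fun i j : Fin 3 =>
        C (A i j) * X 0 + C (B i j) * X 1 : Matrix (Fin 3) (Fin 3) (MvPolynomial (Fin 2) ℂ)).det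
      = C c * ∏ i : Fin 3, (C (a i) * X 0 + C (b i) * X 1) ↔
    ∀ x y : ℂ, (x • A + y • B).det = c * ∏ i, (a i * x + b i * y) := by
  have eval_det (f : Fin 2 → ℂ) : eval f (Matrix.of fun i j : Fin 3 =>
        C (A i j) * X 0 + C (B i j) * X 1 : Matrix (Fin 3) (Fin 3) (MvPolynomial (Fin 2) ℂ)).det
      = (f 0 • A + f 1 • B).det := by
    rw [RingHom.map_det]
    congr 1
    ext i j
    simp [mul_comm]
  constructor
  · intro h x y
    simpa [h, map_prod] using (eval_det ![x, y]).symm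
  · intro h
    refine MvPolynomial.funext fun f => ?_
    simp [eval_det, h, map_prod]

lemma HasThreeDistinctRoots.of_sEquiv {A B A' B' : Matrix (Fin 3) (Fin 3) ℂ}
    (h : HasThreeDistinctRoots A B) (hAB : SEquiv (A, B) (A', B')) :
    HasThreeDistinctRoots A' B' := by
  obtain ⟨g, Q, hg⟩ := sEquiv_iff.mp hAB
  obtain ⟨rfl, rfl⟩ := Prod.ext_iff.mp hg
  obtain ⟨c, a, b, hc, hdet, hab⟩ := h
  have hg : g.val.det ≠ 0 := g.val.isUnit_iff_isUnit_det.mp g.isUnit |>.ne_zero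
  have hQ : Q.val.det ≠ 0 := Q.val.isUnit_iff_isUnit_det.mp Q.isUnit |>.ne_zero
  refine ⟨Q.val.det ^ 2 * c, fun i => a i * g.val 0 0 + b i * g.val 0 1,
    fun i => a i * g.val 1 0 + b i * g.val 1 1, by positivity, fun x y => ?_, fun i j hij => ?_⟩
  · rw [pencil_pencilSMul, det_mul, det_mul, det_transpose, hdet]
    simp only [Fin.prod_univ_three]
    ring
  · rw [det_fin_two] at hg
    intro heq
    exact hab i j hij (mul_left_cancel₀ hg (by linear_combination heq))

lemma hasThreeDistinctRoots_one_diagonal :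
    HasThreeDistinctRoots 1 (diagonal ![1, -1, 0]) := by
  refine ⟨1, ![1, 1, 1], ![1, -1, 0], one_ne_zero, fun x y => ?_, ?_⟩
  · rw [← diagonal_one, ← diagonal_smul, ← diagonal_smul, diagonal_add, det_diagonal]
    simp [Fin.prod_univ_three]
  · intro i j hij
    fin_cases i <;> fin_cases j <;> simp at hij ⊢ <;> norm_num

section SymmetricMatrix

variable {K : Type*} [Field K] {n : Type*} [Fintype n]

lemma eq_zero_of_forall_dotProduct_mulVec_self_eq_zero [DecidableEq n] [NeZero (2 : K)]
    {M : Matrix n n K} (hM : M.IsSymm) (h : ∀ u, u ⬝ᵥ M *ᵥ u = 0) : M = 0 := by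
  have hsymm : (toBilin' M).IsSymm := isSymm_toBilin'_iff_isSymm.mpr hM
  have : toBilin' M = toBilin' 0 :=
    LinearMap.BilinForm.ext_of_isSymm hsymm (isSymm_toBilin'_iff_isSymm.mpr (by simp))
      fun u => by simp [toBilin'_apply', h]
  exact toBilin'.injective this

lemma exists_mulVec_eq_zero_dotProduct_mulVec_ne_zero [DecidableEq n] [NeZero (2 : K)]
    {C₀ C₁ : Matrix n n K} (h₀ : C₀.IsSymm) (h₁ : C₁.IsSymm) (hdet : C₀.det = 0)
    (htr : (adjugate C₀ * C₁).trace ≠ 0) :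
    ∃ v, C₀ *ᵥ v = 0 ∧ v ⬝ᵥ C₁ *ᵥ v ≠ 0 := by
  set N := adjugate C₀
  have hN : N.IsSymm := by simp [N, IsSymm, adjugate_transpose, h₀.eq]
  have hC₀N : C₀ * N = 0 := by simp [N, mul_adjugate, hdet]
  -- if `N C₁ N` vanished, `N C₁` would square to zero and have zero trace
  have hNC₁N : N * C₁ * N ≠ 0 := by
    intro h
    have hnil : IsNilpotent (N * C₁) := ⟨2, by rw [pow_two, ← Matrix.mul_assoc, h, zero_mul]⟩
    exact htr (isNilpotent_trace_of_isNilpotent hnil).eq_zero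
  obtain ⟨u, hu⟩ : ∃ u, u ⬝ᵥ (N * C₁ * N) *ᵥ u ≠ 0 := by
    by_contra! h
    refine hNC₁N (eq_zero_of_forall_dotProduct_mulVec_self_eq_zero ?_ h)
    simp [IsSymm, Matrix.transpose_mul, hN.eq, h₁.eq, Matrix.mul_assoc]
  refine ⟨N *ᵥ u, by rw [mulVec_mulVec, hC₀N, zero_mulVec], ?_⟩
  rwa [← mulVec_mulVec, ← mulVec_mulVec, dotProduct_mulVec, ← mulVec_transpose, hN.eq] at hu

lemma dotProduct_mulVec_eq_zero_of_mulVec_eq_zero {A B : Matrix n n K} (hA : A.IsSymm)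
    (hB : B.IsSymm) {α β α' β' : K} {v w : n → K} (hv : (β • A - α • B) *ᵥ v = 0)
    (hw : (β' • A - α' • B) *ᵥ w = 0) (h : α * β' ≠ α' * β) :
    v ⬝ᵥ A *ᵥ w = 0 ∧ v ⬝ᵥ B *ᵥ w = 0 := by
  have hv' : β * (v ⬝ᵥ A *ᵥ w) - α * (v ⬝ᵥ B *ᵥ w) = 0 := by
    rw [← dotProduct_smul_sub_smul_mulVec, dotProduct_mulVec, ← mulVec_transpose,
      ((hA.smul β).sub (hB.smul α)).eq, hv, zero_dotProduct]
  have hw' : β' * (v ⬝ᵥ A *ᵥ w) - α' * (v ⬝ᵥ B *ᵥ w) = 0 := by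
    rw [← dotProduct_smul_sub_smul_mulVec, hw, dotProduct_zero]
  have hdet := sub_ne_zero.mpr h
  constructor
  · refine (mul_eq_zero.mp (?_ : (α * β' - α' * β) * _ = 0)).resolve_left hdet
    linear_combination α * hw' - α' * hv'
  · refine (mul_eq_zero.mp (?_ : (α * β' - α' * β) * _ = 0)).resolve_left hdet
    linear_combination β * hw' - β' * hv'

lemma of_mul_mul_transpose_eq_diagonal [DecidableEq n] (v : n → n → K) (M : Matrix n n K)
    (h : ∀ i j, i ≠ j → v i ⬝ᵥ M *ᵥ v j = 0) :
    of v * M * (of v)ᵀ = diagonal fun i => v i ⬝ᵥ M *ᵥ v i := by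
  ext i j
  rw [mul_mul_apply, transpose_transpose]
  rcases eq_or_ne i j with rfl | hij
  · exact (diagonal_apply_eq (fun i => v i ⬝ᵥ M *ᵥ v i) i).symm
  · rw [diagonal_apply_ne _ hij]
    exact h i j hij

lemma det_ne_zero_of_mul_mul_transpose_eq_diagonal [DecidableEq n] {V A B : Matrix n n K}
    {d e : n → K} (hA : V * A * Vᵀ = diagonal d) (hB : V * B * Vᵀ = diagonal e)
    (hde : ∀ i, d i ≠ 0 ∨ e i ≠ 0) : V.det ≠ 0 := by
  intro h0
  obtain ⟨w, hw0, hw⟩ := exists_vecMul_eq_zero_iff.mpr h0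
  have hkill {M : Matrix n n K} {f : n → K} (hM : V * M * Vᵀ = diagonal f) (i : n) :
      w i * f i = 0 := by
    rw [← vecMul_diagonal, ← hM, ← vecMul_vecMul, ← vecMul_vecMul, hw, zero_vecMul, zero_vecMul,
      Pi.zero_apply]
  refine hw0 (funext fun i => ?_)
  rcases hde i with hd | he
  · exact (mul_eq_zero.mp (hkill hA i)).resolve_right hd
  · exact (mul_eq_zero.mp (hkill hB i)).resolve_right he

end SymmetricMatrix

lemma mul_ne_mul_of_proportional {K : Type*} [Field K] {a b a' b' d e d' e' : K}
    (hab : a * b' ≠ a' * b) (h : b * d = a * e) (h' : b' * d' = a' * e')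
    (hde : d ≠ 0 ∨ e ≠ 0) (hde' : d' ≠ 0 ∨ e' ≠ 0) : d * e' ≠ d' * e := by
  intro heq
  have cancel (z : K) (hz : (a * b' - a' * b) * z = 0) : z = 0 :=
    (mul_eq_zero.mp hz).resolve_left (sub_ne_zero.mpr hab)
  have hdd' := cancel (d * d') (by linear_combination (a * d) * h' - (a' * d') * h + (a * a') * heq)
  have hee' := cancel (e * e') (by linear_combination (b * b') * heq - (b' * e') * h + (b * e) * h')
  have hde' := cancel (d * e') (by linear_combination (a * b') * heq + (a * e) * h' - (a' * e') * h)
  rw [heq] at hde'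
  rcases hde with hd | he <;> simp_all

lemma det_add_smul_fin_three {R : Type*} [CommRing R] (X Y : Matrix (Fin 3) (Fin 3) R) (t : R) :
    (X + t • Y).det
      = X.det + t * (adjugate X * Y).trace + t ^ 2 * (adjugate Y * X).trace + t ^ 3 * Y.det := by
  simp only [det_fin_three, adjugate_fin_three, trace_fin_three, Matrix.mul_apply,
    Fin.sum_univ_three, Matrix.add_apply, Matrix.smul_apply, smul_eq_mul, Matrix.of_apply,
    Matrix.cons_val', Matrix.cons_val_zero, Matrix.cons_val_one, Matrix.cons_val_two,
    Matrix.head_cons, Matrix.tail_cons, Matrix.empty_val', Matrix.cons_val_fin_one,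
    Matrix.head_fin_const]
  ring

section SymmetricPencil

variable {A B : Matrix (Fin 3) (Fin 3) ℂ} {c : ℂ} {a b : Fin 3 → ℂ}

lemma exists_kernel_vector_of_det_pencil_eq_prod_zero (hA : A.IsSymm) (hB : B.IsSymm)
    (hc : c ≠ 0) (hdet : ∀ x y : ℂ, (x • A + y • B).det = c * ∏ i, (a i * x + b i * y))
    (hab : ∀ i j, i ≠ j → a i * b j ≠ a j * b i) :
    ∃ v, (b 0 • A - a 0 • B) *ᵥ v = 0 ∧ v ⬝ᵥ (b 1 • A - a 1 • B) *ᵥ v ≠ 0 := by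
  set C₀ := b 0 • A - a 0 • B
  set C₁ := b 1 • A - a 1 • B
  have hcubic (t : ℂ) : C₀.det + t * (adjugate C₀ * C₁).trace + t ^ 2 * (adjugate C₁ * C₀).trace
      + t ^ 3 * C₁.det = c * ∏ i, (a i * (b 0 + t * b 1) + b i * -(a 0 + t * a 1)) := by
    rw [← det_add_smul_fin_three, ← hdet]
    congr 1
    module
  simp only [Fin.prod_univ_three] at hcubic
  -- the linear coefficient of a cubic from its values at `0, 1, -1, 2`
  have htr : (adjugate C₀ * C₁).trace
      = c * ((a 0 * b 1 - a 1 * b 0) * (a 1 * b 0 - a 0 * b 1) * (a 2 * b 0 - a 0 * b 2)) := by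
    linear_combination (6 * hcubic 1 - 2 * hcubic (-1) - 3 * hcubic 0 - hcubic 2) / 6
  refine exists_mulVec_eq_zero_dotProduct_mulVec_ne_zero (hA.smul _ |>.sub (hB.smul _))
    (hA.smul _ |>.sub (hB.smul _)) (by linear_combination hcubic 0) ?_
  rw [htr]
  have h01 := sub_ne_zero.mpr (hab 0 1 (by decide))
  have h10 := sub_ne_zero.mpr (hab 1 0 (by decide))
  have h20 := sub_ne_zero.mpr (hab 2 0 (by decide))
  exact mul_ne_zero hc (mul_ne_zero (mul_ne_zero h01 h10) h20)

lemma exists_kernel_vector_of_det_pencil_eq_prod (hA : A.IsSymm) (hB : B.IsSymm) (hc : c ≠ 0)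
    (hdet : ∀ x y : ℂ, (x • A + y • B).det = c * ∏ i, (a i * x + b i * y))
    (hab : ∀ i j, i ≠ j → a i * b j ≠ a j * b i) (i : Fin 3) :
    ∃ v, (b i • A - a i • B) *ᵥ v = 0 ∧ (v ⬝ᵥ A *ᵥ v ≠ 0 ∨ v ⬝ᵥ B *ᵥ v ≠ 0) := by
  let σ := Equiv.swap 0 i
  obtain ⟨v, hv, hne⟩ := exists_kernel_vector_of_det_pencil_eq_prod_zero (a := a ∘ σ) (b := b ∘ σ)
    hA hB hc (fun x y => by rw [hdet, ← Equiv.prod_comp σ]; rfl)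
    (fun j k hjk => hab (σ j) (σ k) (σ.injective.ne hjk))
  refine ⟨v, by simpa [σ] using hv, ?_⟩
  by_contra! h
  simp [dotProduct_smul_sub_smul_mulVec, h.1, h.2] at hne

end SymmetricPencil

lemma sEquiv_diagonal_of_sq_eq {d e D r : Fin 3 → ℂ} (g : Matrix (Fin 2) (Fin 2) ℂ)
    (hg : g.det ≠ 0) (hr : ∀ i, r i ≠ 0) (h₁ : ∀ i, g 0 0 * d i + g 0 1 * e i = r i ^ 2)
    (h₂ : ∀ i, g 1 0 * d i + g 1 1 * e i = r i ^ 2 * D i) :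
    SEquiv (diagonal d, diagonal e) (1, diagonal D) := by
  have hs : (diagonal fun i => (r i)⁻¹).det ≠ 0 := by
    simp [det_diagonal, Finset.prod_ne_zero_iff, hr]
  refine sEquiv_iff.mpr ⟨.mkOfDetNeZero g hg, .mkOfDetNeZero _ hs, ?_⟩
  change _ = pencilSMul g (diagonal _) _
  rw [pencilSMul_diagonal, ← diagonal_one]
  simp only [h₁, h₂]
  congr 2 <;> ext i <;> field_simp [hr i]

lemma sEquiv_diagonal {d e : Fin 3 → ℂ} (hde : ∀ i j, i ≠ j → d i * e j ≠ d j * e i) :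
    SEquiv (diagonal d, diagonal e) (1, diagonal ![1, -1, 0]) := by
  set Δ := d 0 * e 1 - d 1 * e 0
  set s₁ := e 2 * d 0 - d 2 * e 0
  set s₂ := e 2 * d 1 - d 2 * e 1
  have hΔ : Δ ≠ 0 := sub_ne_zero.mpr (hde 0 1 (by decide))
  have hs₁ : s₁ ≠ 0 := fun h => hde 0 2 (by decide) (by linear_combination h)
  have hs₂ : s₂ ≠ 0 := fun h => hde 1 2 (by decide) (by linear_combination h)
  -- Cramer's rule for `α d 0 + β e 0 = s₁`, `α d 1 + β e 1 = -s₂`: the second row `(e 2, -d 2)`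
  -- of `g` then takes the values `s₁, s₂, 0`, i.e. `diag(1, -1, 0)` after rescaling
  set α := (s₁ * e 1 + s₂ * e 0) / Δ
  set β := (-(s₂ * d 0) - s₁ * d 1) / Δ
  have hlin (i : Fin 3) : α * d i + β * e i = ((s₁ * e 1 + s₂ * e 0) * d i
      + (-(s₂ * d 0) - s₁ * d 1) * e i) / Δ := by
    simp only [α, β]; ring
  have ht₀ : α * d 0 + β * e 0 = s₁ := by
    rw [hlin, div_eq_iff hΔ]; ring
  have ht₁ : α * d 1 + β * e 1 = -s₂ := by
    rw [hlin, div_eq_iff hΔ]; ring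
  have ht₂ : α * d 2 + β * e 2 = -2 * s₁ * s₂ / Δ := by
    rw [hlin, div_left_inj' hΔ]; simp only [s₁, s₂]; ring
  have ht : ∀ i, α * d i + β * e i ≠ 0 := by
    intro i
    fin_cases i
    · change α * d 0 + β * e 0 ≠ 0
      rwa [ht₀]
    · change α * d 1 + β * e 1 ≠ 0
      rw [ht₁]; exact neg_ne_zero.mpr hs₂
    · change α * d 2 + β * e 2 ≠ 0
      simp [ht₂, hs₁, hs₂, hΔ]
  choose r hr using fun i => IsAlgClosed.exists_pow_nat_eq (α * d i + β * e i) two_pos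
  refine sEquiv_diagonal_of_sq_eq (r := r) !![α, β; e 2, -d 2] ?_ (fun i h => ht i ?_)
    (fun i => ?_) (fun i => ?_)
  · rw [det_fin_two_of, show α * -d 2 - β * e 2 = -(α * d 2 + β * e 2) by ring]
    exact neg_ne_zero.mpr (ht 2)
  · rw [← hr i, h, zero_pow two_ne_zero]
  · simp [hr]
  · fin_cases i <;> simp [hr, ht₀, ht₁] <;> ring

lemma HasThreeDistinctRoots.sEquiv {A B : Matrix (Fin 3) (Fin 3) ℂ} (hA : A.IsSymm)
    (hB : B.IsSymm) (h : HasThreeDistinctRoots A B) :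
    SEquiv (A, B) (1, diagonal ![1, -1, 0]) := by
  obtain ⟨c, a, b, hc, hdet, hab⟩ := h
  choose v hv hiso using exists_kernel_vector_of_det_pencil_eq_prod hA hB hc hdet hab
  have horth (i j) (hij : i ≠ j) :=
    dotProduct_mulVec_eq_zero_of_mulVec_eq_zero hA hB (hv i) (hv j) (hab i j hij)
  have hVA := of_mul_mul_transpose_eq_diagonal v A fun i j hij => (horth i j hij).1
  have hVB := of_mul_mul_transpose_eq_diagonal v B fun i j hij => (horth i j hij).2
  have hV := det_ne_zero_of_mul_mul_transpose_eq_diagonal hVA hVB hiso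
  have hprop (i) : b i * (v i ⬝ᵥ A *ᵥ v i) = a i * (v i ⬝ᵥ B *ᵥ v i) := by
    rw [← sub_eq_zero, ← dotProduct_smul_sub_smul_mulVec, hv i, dotProduct_zero]
  refine (sEquiv_iff.mpr ⟨1, .mkOfDetNeZero (of v) hV, ?_⟩).trans
    (sEquiv_diagonal fun i j hij => mul_ne_mul_of_proportional (hab i j hij) (hprop i) (hprop j)
      (hiso i) (hiso j))
  simp [pencilSMul, GeneralLinearGroup.mkOfDetNeZero, hVA, hVB]

open MvPolynomial in
/-- A pair `(A, B)` of symmetric 3×3 complex matrices is `GL₂(ℂ) × GL₃(ℂ)`-equivalent to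
`(I₃, diag(1,−1,0))` if and only if the binary cubic `det(xA + yB)` factors as
`c·(a₁x+b₁y)(a₂x+b₂y)(a₃x+b₃y)` with `c ≠ 0` and the three vectors `(aᵢ, bᵢ)` pairwise
linearly independent: the generic orbit `O₁₀` of `(F₄, α₂)` consists exactly of the pencils
of symmetric matrices whose determinant has three distinct roots. -/
theorem generic_symmetric_pencil_iff_three_distinct_roots (A B : Matrix (Fin 3) (Fin 3) ℂ)
    (hA : A.IsSymm) (hB : B.IsSymm) :
    SEquiv (A, B) (1, diagonal ![1, -1, 0]) ↔
    ∃ (c : ℂ) (a b : Fin 3 → ℂ), c ≠ 0 ∧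
      (Matrix.of fun i j : Fin 3 =>
          C (A i j) * X 0 + C (B i j) * X 1 : Matrix (Fin 3) (Fin 3) (MvPolynomial (Fin 2) ℂ)).det
        = C c * ∏ i : Fin 3, (C (a i) * X 0 + C (b i) * X 1) ∧
      (∀ i j : Fin 3, i ≠ j → a i * b j ≠ a j * b i) := by
  simp only [det_pencil_eq_prod_iff]
  exact ⟨fun h => hasThreeDistinctRoots_one_diagonal.of_sEquiv h.symm,
    HasThreeDistinctRoots.sEquiv hA hB⟩
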